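/- arXiv:1906.05855 — 3 statements merged into one kernel-verified Lean document; each statement's English description precedes it below -/
import Mathlib

section
/- For every 𝐱 ∈ ℝ³ the partial derivative ∂_t Δ_λ(t,𝐱) at t = 0 exists and equals (2π)^{−3} ∫_{ℝ³} e^{−λ²(2|𝐩|²+m²)} cos(𝐩·𝐱) d𝐩 = (2π)^{−3} (√(π/2)/λ)³ e^{−|𝐱|²/(8λ²)} e^{−λ²m²} = 2√(2π) λ e^{−λ²m²} G_{2λ}(0,𝐱). -/
open Real MeasureTheory
open scoped RealInnerProductSpace

noncomputable section

/-- ω(p) = √(|p|² + m²) -/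
def freqOmega (m : ℝ) (p : EuclideanSpace ℝ (Fin 3)) : ℝ := Real.sqrt (‖p‖ ^ 2 + m ^ 2)

/-- The modified commutator function Δ_λ(t,x). -/
def DeltaLam (m lam : ℝ) (t : ℝ) (x : EuclideanSpace ℝ (Fin 3)) : ℝ :=
  ((2 * π) ^ 3)⁻¹ * ∫ p : EuclideanSpace ℝ (Fin 3),
    (freqOmega m p)⁻¹ * Real.exp (-lam ^ 2 * (2 * ‖p‖ ^ 2 + m ^ 2)) *
      Real.sin (freqOmega m p * t - ⟪p, x⟫)

/-- The Gaussian G_μ(t,𝐱) = e^{−(t²+|𝐱|²)/(2μ²)} / (√(2π) μ)⁴ on ℝ × ℝ³ ≅ ℝ⁴. -/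
def GaussG (mu : ℝ) (t : ℝ) (x : EuclideanSpace ℝ (Fin 3)) : ℝ :=
  Real.exp (-(t ^ 2 + ‖x‖ ^ 2) / (2 * mu ^ 2)) / (Real.sqrt (2 * π) * mu) ^ 4

end

/-!
Since `ω ≥ m > 0`, both the integrand of `Δ_λ(·, x)` and its `t`-derivative
`e^{-λ²(2|p|²+m²)} cos (ω t - p·x)` are dominated by an integrable Gaussian, so one may
differentiate under the integral sign; the factor `ω⁻¹` is cancelled by the derivative of
`sin (ω t - p·x)`. What remains at `t = 0` is `e^{-λ²m²}` times the real part of the Fourier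
transform of a Gaussian, `∫ e^{-b|p|²} e^{i p·x} dp = (π/b)^{3/2} e^{-|x|²/(4b)}` with `b = 2λ²`.
-/

section GaussianIntegrals

variable {V : Type*} [NormedAddCommGroup V] [InnerProductSpace ℝ V] [FiniteDimensional ℝ V]
  [MeasurableSpace V] [BorelSpace V]

lemma integrable_exp_neg_mul_sq_norm {b : ℝ} (hb : 0 < b) :
    Integrable (fun v : V => rexp (-b * ‖v‖ ^ 2)) := by
  have h := (GaussianFourier.integrable_cexp_neg_mul_sq_norm_add (V := V)
    (b := (b : ℂ)) (by simpa using hb) 0 0).norm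
  simpa [Complex.norm_exp, ← Complex.ofReal_pow] using h

lemma integral_exp_neg_mul_sq_norm_mul_cos_inner {b : ℝ} (hb : 0 < b) (w : V) :
    ∫ v : V, rexp (-b * ‖v‖ ^ 2) * cos ⟪v, w⟫ =
      (π / b) ^ (Module.finrank ℝ V / 2 : ℝ) * rexp (-‖w‖ ^ 2 / (4 * b)) := by
  have hb' : 0 < (b : ℂ).re := by simpa using hb
  have hre :=
    (integral_re (GaussianFourier.integrable_cexp_neg_mul_sq_norm_add hb' Complex.I w)).trans
      (congrArg Complex.re (GaussianFourier.integral_cexp_neg_mul_sq_norm_add hb' Complex.I w))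
  refine (integral_congr_ae (ae_of_all _ fun v => ?_)).trans (hre.trans ?_)
  · simp [RCLike.re_to_complex, Complex.exp_re, ← Complex.ofReal_pow, real_inner_comm]
  · rw [show Complex.I ^ 2 * (‖w‖ : ℂ) ^ 2 / (4 * b) = ((-‖w‖ ^ 2 / (4 * b) : ℝ) : ℂ) by
        push_cast; rw [Complex.I_sq]; ring,
      ← Complex.ofReal_div, ← Complex.ofReal_natCast, ← Complex.ofReal_ofNat,
      ← Complex.ofReal_div, ← Complex.ofReal_cpow (by positivity), ← Complex.ofReal_exp,
      ← Complex.ofReal_mul, Complex.ofReal_re]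

end GaussianIntegrals

lemma hasDerivAt_integral_inv_mul_mul_sin {α : Type*} [MeasurableSpace α] {μ : Measure α}
    {E ω φ : α → ℝ} {c : ℝ} (hc : 0 < c) (hE : Integrable E μ) (hω : Measurable ω)
    (hφ : Measurable φ) (hωc : ∀ p, c ≤ ω p) (t₀ : ℝ) :
    HasDerivAt (fun t => ∫ p, (ω p)⁻¹ * E p * sin (ω p * t - φ p) ∂μ)
      (∫ p, E p * cos (ω p * t₀ - φ p) ∂μ) t₀ := by
  have hω_pos : ∀ p, 0 < ω p := fun p => hc.trans_le (hωc p)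
  have hF_meas : ∀ t, AEStronglyMeasurable (fun p => (ω p)⁻¹ * E p * sin (ω p * t - φ p)) μ :=
    fun t => (hω.inv.aestronglyMeasurable.mul hE.1).mul
      (by fun_prop : Measurable fun p => sin (ω p * t - φ p)).aestronglyMeasurable
  have hF_int : Integrable (fun p => (ω p)⁻¹ * E p * sin (ω p * t₀ - φ p)) μ := by
    refine (hE.norm.const_mul c⁻¹).mono' (hF_meas t₀) (ae_of_all _ fun p => ?_)
    rw [norm_mul, norm_mul, Real.norm_of_nonneg (inv_pos.2 (hω_pos p)).le]
    calc (ω p)⁻¹ * ‖E p‖ * ‖sin (ω p * t₀ - φ p)‖ ≤ c⁻¹ * ‖E p‖ * 1 := by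
          gcongr
          · exact hωc p
          · exact abs_sin_le_one _
      _ = c⁻¹ * ‖E p‖ := mul_one _
  refine (hasDerivAt_integral_of_dominated_loc_of_deriv_le (bound := fun p => ‖E p‖)
    (F' := fun t p => E p * cos (ω p * t - φ p))
    Filter.univ_mem (.of_forall hF_meas) hF_int
    (hE.1.mul (by fun_prop : Measurable fun p => cos (ω p * t₀ - φ p)).aestronglyMeasurable)
    (ae_of_all _ fun p t _ => ?_) hE.norm (ae_of_all _ fun p t _ => ?_)).2
  · rw [norm_mul]
    exact mul_le_of_le_one_right (norm_nonneg _) (abs_cos_le_one _)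
  · have h := (((hasDerivAt_id' t).const_mul (ω p)).sub_const (φ p)).sin.const_mul
      ((ω p)⁻¹ * E p)
    refine h.congr_deriv ?_
    field_simp [(hω_pos p).ne']

lemma le_freqOmega (m : ℝ) (p : EuclideanSpace ℝ (Fin 3)) : m ≤ freqOmega m p :=
  Real.le_sqrt_of_sq_le (le_add_of_nonneg_left (sq_nonneg _))

lemma measurable_freqOmega (m : ℝ) : Measurable (freqOmega m) := by
  unfold freqOmega; fun_prop

lemma exp_neg_sq_mul_two_mul_add_sq (lam m s : ℝ) :
    rexp (-lam ^ 2 * (2 * s + m ^ 2)) = rexp (-lam ^ 2 * m ^ 2) * rexp (-(2 * lam ^ 2) * s) := by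
  rw [← exp_add]; ring_nf

lemma integral_exp_neg_sq_mul_two_mul_sq_norm_add_sq_mul_cos_inner (m : ℝ) {lam : ℝ}
    (hlam : 0 < lam) (x : EuclideanSpace ℝ (Fin 3)) :
    ∫ p : EuclideanSpace ℝ (Fin 3), rexp (-lam ^ 2 * (2 * ‖p‖ ^ 2 + m ^ 2)) * cos ⟪p, x⟫ =
      (√(π / 2) / lam) ^ 3 * rexp (-‖x‖ ^ 2 / (8 * lam ^ 2)) * rexp (-lam ^ 2 * m ^ 2) := by
  have hb : 0 < 2 * lam ^ 2 := by positivity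
  simp_rw [exp_neg_sq_mul_two_mul_add_sq, mul_assoc (rexp _)]
  rw [integral_const_mul, integral_exp_neg_mul_sq_norm_mul_cos_inner hb, finrank_euclideanSpace,
    Fintype.card_fin, Nat.cast_ofNat, rpow_div_two_eq_sqrt _ (by positivity),
    show π / (2 * lam ^ 2) = (√(π / 2) / lam) ^ 2 by
      rw [div_pow, sq_sqrt (by positivity)]; ring,
    sqrt_sq (by positivity), show (3 : ℝ) = (3 : ℕ) by norm_num, rpow_natCast]
  ring_nf

lemma two_mul_sqrt_two_pi_mul_GaussG_zero {lam : ℝ} (hlam : 0 < lam)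
    (x : EuclideanSpace ℝ (Fin 3)) :
    2 * √(2 * π) * lam * GaussG (2 * lam) 0 x =
      ((2 * π) ^ 3)⁻¹ * (√(π / 2) / lam) ^ 3 * rexp (-‖x‖ ^ 2 / (8 * lam ^ 2)) := by
  have hsqrt : √(π / 2) = π / √(2 * π) := by
    rw [eq_div_iff (by positivity), ← sqrt_mul (by positivity),
      show π / 2 * (2 * π) = π ^ 2 by ring, sqrt_sq pi_pos.le]
  rw [GaussG, hsqrt, show -(0 ^ 2 + ‖x‖ ^ 2) / (2 * (2 * lam) ^ 2) = -‖x‖ ^ 2 / (8 * lam ^ 2) by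
    ring]
  field_simp

theorem stmt_5 (m lam : ℝ) (hm : 0 < m) (hlam : 0 < lam)
    (x : EuclideanSpace ℝ (Fin 3))
    (D : ℝ)
    (hD : D = ((2 * π) ^ 3)⁻¹ * ∫ p : EuclideanSpace ℝ (Fin 3),
      Real.exp (-lam ^ 2 * (2 * ‖p‖ ^ 2 + m ^ 2)) * Real.cos (⟪p, x⟫)) :
    HasDerivAt (fun t => DeltaLam m lam t x) D 0 ∧
    D = ((2 * π) ^ 3)⁻¹ * (Real.sqrt (π / 2) / lam) ^ 3 *
        Real.exp (-‖x‖ ^ 2 / (8 * lam ^ 2)) * Real.exp (-lam ^ 2 * m ^ 2) ∧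
    D = 2 * Real.sqrt (2 * π) * lam * Real.exp (-lam ^ 2 * m ^ 2) * GaussG (2 * lam) 0 x := by
  have hE : Integrable fun p : EuclideanSpace ℝ (Fin 3) =>
      rexp (-lam ^ 2 * (2 * ‖p‖ ^ 2 + m ^ 2)) := by
    simp_rw [exp_neg_sq_mul_two_mul_add_sq]
    exact (integrable_exp_neg_mul_sq_norm (by positivity)).const_mul _
  have hderiv := (hasDerivAt_integral_inv_mul_mul_sin (φ := (⟪·, x⟫)) hm hE
    (measurable_freqOmega m) (by fun_prop) (le_freqOmega m) 0).const_mul ((2 * π) ^ 3)⁻¹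
  have hval : D = ((2 * π) ^ 3)⁻¹ * (√(π / 2) / lam) ^ 3 *
      rexp (-‖x‖ ^ 2 / (8 * lam ^ 2)) * rexp (-lam ^ 2 * m ^ 2) := by
    rw [hD, integral_exp_neg_sq_mul_two_mul_sq_norm_add_sq_mul_cos_inner m hlam]
    ring
  refine ⟨?_, hval, ?_⟩
  · simp only [mul_zero, zero_sub, cos_neg] at hderiv
    exact hD ▸ hderiv
  · rw [hval, mul_right_comm (2 * √(2 * π) * lam), two_mul_sqrt_two_pi_mul_GaussG_zero hlam]
end

section
/- For every T ≥ 0 one has ∫_0^T dt / ((T − t + 1)^{3/2} (t + 1)^{3/2}) = 4T / (√(1+T) (2+T)²), and this quantity is bounded above by 4/(T+1)^{3/2}. -/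
open Real MeasureTheory

/-!
With `p(t) = (T - t + c)(t + c)` one has `4p + (2t - T)² = (T + 2c)²`, so
`2(2t - T) / ((T + 2c)² √p)` is an explicit primitive of `p^{-3/2}`; evaluating it at the
endpoints gives the closed form. The bound reduces to `T (T + 1) ≤ (T + 2)²`.
-/

lemma rpow_three_halves {x : ℝ} (hx : 0 ≤ x) : x ^ ((3 : ℝ) / 2) = x * √x := by
  rw [show (3 : ℝ) / 2 = 1 + 1 / 2 by norm_num, rpow_add' hx (by norm_num), rpow_one,
    sqrt_eq_rpow]

lemma hasDerivAt_div_sqrt_mul {T c t : ℝ} (ha : 0 < T - t + c) (hb : 0 < t + c) :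
    HasDerivAt (fun t => (2 * t - T) / √((T - t + c) * (t + c)))
      ((T + 2 * c) ^ 2 / (2 * ((T - t + c) ^ ((3 : ℝ) / 2) * (t + c) ^ ((3 : ℝ) / 2)))) t := by
  have hp : 0 < (T - t + c) * (t + c) := mul_pos ha hb
  have hquad : HasDerivAt (fun t => (T - t + c) * (t + c)) (T - 2 * t) t := by
    refine ((((hasDerivAt_id t).const_sub T).add_const c).mul
      ((hasDerivAt_id t).add_const c)).congr_deriv ?_
    simp only [id]; ring
  have hlin : HasDerivAt (fun t : ℝ => 2 * t - T) 2 t := by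
    simpa using ((hasDerivAt_id t).const_mul 2).sub_const T
  refine (hlin.div (hquad.sqrt hp.ne') (sqrt_pos.mpr hp).ne').congr_deriv ?_
  rw [rpow_three_halves ha.le, rpow_three_halves hb.le, sqrt_mul ha.le]
  have ea := sq_sqrt ha.le
  have eb := sq_sqrt hb.le
  have := (sqrt_pos.mpr ha).ne'
  have := (sqrt_pos.mpr hb).ne'
  field_simp
  rw [ea, eb]
  ring

theorem integral_one_div_rpow_three_halves_mul {T c : ℝ} (hT : 0 ≤ T) (hc : 0 < c) :
    ∫ t in (0 : ℝ)..T, 1 / ((T - t + c) ^ ((3 : ℝ) / 2) * (t + c) ^ ((3 : ℝ) / 2))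
      = 4 * T / (√(c * (T + c)) * (T + 2 * c) ^ 2) := by
  have hderiv : ∀ t ∈ Set.uIcc 0 T, HasDerivAt
      (fun t => 2 / (T + 2 * c) ^ 2 * ((2 * t - T) / √((T - t + c) * (t + c))))
      (1 / ((T - t + c) ^ ((3 : ℝ) / 2) * (t + c) ^ ((3 : ℝ) / 2))) t := by
    intro t ht
    rw [Set.uIcc_of_le hT] at ht
    refine ((hasDerivAt_div_sqrt_mul (by linarith [ht.2]) (by linarith [ht.1])).const_mul
      _).congr_deriv ?_
    field_simp
  have hcont : ContinuousOn
      (fun t => 1 / ((T - t + c) ^ ((3 : ℝ) / 2) * (t + c) ^ ((3 : ℝ) / 2))) (Set.uIcc 0 T) := by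
    refine continuousOn_const.div (by fun_prop (disch := norm_num)) fun t ht => ?_
    rw [Set.uIcc_of_le hT] at ht
    have : 0 < T - t + c := by linarith [ht.2]
    have : 0 < t + c := by linarith [ht.1]
    positivity
  rw [intervalIntegral.integral_eq_sub_of_hasDerivAt hderiv hcont.intervalIntegrable]
  rw [show (T - T + c) * (T + c) = c * (T + c) by ring,
    show (T - 0 + c) * (0 + c) = c * (T + c) by ring]
  have := (sqrt_pos.mpr (by positivity : 0 < c * (T + c))).ne'
  field_simp
  ring

lemma four_mul_div_sqrt_mul_sq_le {T : ℝ} (hT : 0 ≤ T) :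
    4 * T / (√(1 + T) * (2 + T) ^ 2) ≤ 4 / (T + 1) ^ ((3 : ℝ) / 2) := by
  have := sqrt_pos.mpr (by linarith : 0 < 1 + T)
  rw [rpow_three_halves (by linarith), add_comm T 1, div_le_div_iff₀ (by positivity) (by positivity)]
  have : T * (1 + T) ≤ (2 + T) ^ 2 := by nlinarith
  nlinarith

theorem stmt_17 (T : ℝ) (hT : 0 ≤ T) :
    (∫ t in (0 : ℝ)..T, 1 / ((T - t + 1) ^ ((3 : ℝ) / 2) * (t + 1) ^ ((3 : ℝ) / 2)))
      = 4 * T / (Real.sqrt (1 + T) * (2 + T) ^ 2) ∧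
    4 * T / (Real.sqrt (1 + T) * (2 + T) ^ 2) ≤ 4 / (T + 1) ^ ((3 : ℝ) / 2) := by
  refine ⟨?_, four_mul_div_sqrt_mul_sq_le hT⟩
  rw [integral_one_div_rpow_three_halves_mul hT one_pos, one_mul, mul_one,
    add_comm T 1, add_comm T 2]
end

section
/- Let m > 0, let n ≥ 1, and let T be a tree (a connected acyclic simple graph) on the vertex set {0, 1, …, n}. Fix 𝐱₀ ∈ ℝ³. Then the function (𝐱₁, …, 𝐱ₙ) ↦ ∏_{{i,j} ∈ E(T)} e^{−m|𝐱ᵢ − 𝐱ⱼ|} is integrable on (ℝ³)ⁿ and ∫_{(ℝ³)ⁿ} ∏_{{i,j} ∈ E(T)} e^{−m|𝐱ᵢ − 𝐱ⱼ|} d𝐱₁ ⋯ d𝐱ₙ = (8π/m³)ⁿ, independently of 𝐱₀. -/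
open Real MeasureTheory
open scoped BigOperators

/-- The symmetric weight e^{−m|Xᵢ − Xⱼ|} attached to an (unordered) edge {i,j}. -/
noncomputable def edgeWeight {V : Type*} (m : ℝ) (X : V → EuclideanSpace ℝ (Fin 3)) :
    Sym2 V → ℝ :=
  Sym2.lift ⟨fun i j => Real.exp (-m * ‖X i - X j‖),
    fun i j => by simp only []; rw [norm_sub_rev]⟩

/-!
Root the tree at `0` and give every other vertex `v` a neighbour `parent v` strictly closer to
the root. Then `v ↦ {v, parent v}` is a bijection from the non-root vertices onto the edges, and
in the variables `uᵥ = xᵥ - x_{parent v}` the integrand becomes `∏ᵥ e^{-m|uᵥ|}`. This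
substitution is a translate of `1 - N` with `N y = (v ↦ y_{parent v})` nilpotent, so it has
determinant one and preserves Lebesgue measure. Each of the `n` factors then contributes
`∫ e^{-m|u|} du = 8π/m³`, computed in polar coordinates.
-/

open Set Module
open scoped Nat

theorem integral_pow_mul_exp_neg_mul_Ioi (k : ℕ) {c : ℝ} (hc : 0 < c) :
    ∫ x in Ioi (0 : ℝ), x ^ k * exp (-c * x) = k ! / c ^ (k + 1) := by
  have key := integral_rpow_mul_exp_neg_mul_Ioi (a := k + 1) (by positivity) hc
  simp_rw [add_sub_cancel_right, rpow_natCast, ← neg_mul] at key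
  rw [key, Gamma_nat_eq_factorial, ← Nat.cast_add_one, one_div, inv_rpow hc.le, rpow_natCast]
  ring

section NormExponential

variable {E : Type*} [NormedAddCommGroup E] [NormedSpace ℝ E] [FiniteDimensional ℝ E]
  [MeasurableSpace E] [BorelSpace E] [Nontrivial E] (μ : Measure E) [μ.IsAddHaarMeasure]
  {m : ℝ}

theorem integral_exp_neg_mul_norm (hm : 0 < m) :
    ∫ x, exp (-m * ‖x‖) ∂μ =
      μ.real (Metric.ball 0 1) * (finrank ℝ E)! / m ^ finrank ℝ E := by
  obtain ⟨k, hk⟩ := Nat.exists_eq_add_one_of_ne_zero (finrank_pos (R := ℝ) (M := E)).ne'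
  rw [integral_fun_norm_addHaar μ (fun r => exp (-m * r)), hk, Nat.add_sub_cancel]
  simp only [smul_eq_mul, nsmul_eq_mul, integral_pow_mul_exp_neg_mul_Ioi k hm, Nat.factorial_succ]
  push_cast
  ring

theorem integrable_exp_neg_mul_norm (hm : 0 < m) :
    Integrable (fun x => exp (-m * ‖x‖)) μ := by
  refine .of_integral_ne_zero ?_
  rw [integral_exp_neg_mul_norm μ hm]
  have : 0 < μ.real (Metric.ball 0 1) :=
    ENNReal.toReal_pos (Metric.measure_ball_pos μ 0 one_pos).ne' measure_ball_lt_top.ne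
  positivity

end NormExponential

theorem EuclideanSpace.integral_exp_neg_mul_norm_fin_three {m : ℝ} (hm : 0 < m) :
    ∫ x : EuclideanSpace ℝ (Fin 3), exp (-m * ‖x‖) = 8 * π / m ^ 3 := by
  rw [integral_exp_neg_mul_norm volume hm, finrank_euclideanSpace_fin, Measure.real,
    EuclideanSpace.volume_ball_fin_three, ENNReal.ofReal_one, one_pow, one_mul,
    ENNReal.toReal_ofReal (by positivity)]
  simp [Nat.factorial]
  ring

namespace SimpleGraph

theorem Connected.exists_adj_dist_lt {V : Type*} {G : SimpleGraph V} (hG : G.Connected)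
    {v r : V} (hv : v ≠ r) : ∃ w, G.Adj v w ∧ G.dist w r < G.dist v r := by
  obtain ⟨p, hp⟩ := hG.exists_walk_length_eq_dist v r
  cases p with
  | nil => exact absurd rfl hv
  | cons h q => exact ⟨_, h, (dist_le q).trans_lt (by simp [← hp])⟩

variable {n : ℕ} {G : SimpleGraph (Fin (n + 1))}

noncomputable def Connected.parent (hG : G.Connected) (i : Fin n) : Fin (n + 1) :=
  (hG.exists_adj_dist_lt i.succ_ne_zero).choose

theorem Connected.adj_parent (hG : G.Connected) (i : Fin n) : G.Adj i.succ (hG.parent i) :=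
  (hG.exists_adj_dist_lt i.succ_ne_zero).choose_spec.1

theorem Connected.dist_parent_lt (hG : G.Connected) (i : Fin n) :
    G.dist (hG.parent i) 0 < G.dist i.succ 0 :=
  (hG.exists_adj_dist_lt i.succ_ne_zero).choose_spec.2

theorem Connected.sym2_mk_succ_parent_injective (hG : G.Connected) :
    Function.Injective fun i => s(i.succ, hG.parent i) := by
  intro i j hij
  rcases Sym2.eq_iff.mp hij with ⟨hij, -⟩ | ⟨hi, hj⟩
  · exact Fin.succ_injective _ hij
  · have hi' := hG.dist_parent_lt i
    have hj' := hG.dist_parent_lt j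
    rw [hj] at hi'
    rw [← hi] at hj'
    omega

theorem IsTree.prod_edgeFinset_eq_prod_parent [DecidableRel G.Adj] (hT : G.IsTree)
    {M : Type*} [CommMonoid M] (f : Sym2 (Fin (n + 1)) → M) :
    ∏ e ∈ G.edgeFinset, f e = ∏ i, f s(i.succ, hT.connected.parent i) := by
  classical
  have himage :
      Finset.univ.image (fun i => s(i.succ, hT.connected.parent i)) = G.edgeFinset := by
    refine Finset.eq_of_subset_of_card_le ?_ ?_
    · simp only [Finset.subset_iff, Finset.mem_image, mem_edgeFinset]
      rintro _ ⟨i, -, rfl⟩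
      exact hT.connected.adj_parent i
    · have := hT.card_edgeFinset
      rw [Finset.card_image_of_injective _ hT.connected.sym2_mk_succ_parent_injective]
      simp only [Finset.card_univ, Fintype.card_fin] at *
      omega
  rw [← himage, Finset.prod_image fun i _ j _ h => hT.connected.sym2_mk_succ_parent_injective h]

end SimpleGraph

theorem LinearMap.det_one_sub_of_isNilpotent {R M : Type*} [CommRing R] [IsDomain R]
    [AddCommGroup M] [Module R M] [Module.Free R M] [Module.Finite R M] {f : M →ₗ[R] M}
    (hf : IsNilpotent f) : LinearMap.det (1 - f) = 1 := by
  simpa [hf.charpoly_eq_X_pow_finrank] using (f.eval_charpoly 1).symm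

theorem LinearMap.measurePreserving_of_det_eq_one {E : Type*} [NormedAddCommGroup E]
    [NormedSpace ℝ E] [FiniteDimensional ℝ E] [MeasurableSpace E] [BorelSpace E]
    (μ : Measure E) [μ.IsAddHaarMeasure] {f : E →ₗ[ℝ] E} (hf : LinearMap.det f = 1) :
    MeasurePreserving f μ μ := by
  refine ⟨f.continuous_of_finiteDimensional.measurable, ?_⟩
  rw [Measure.map_linearMap_addHaar_eq_smul_addHaar μ (by simp [hf]), hf]
  simp

def parentDiff {E : Type*} [AddCommGroup E] {n : ℕ} (p : Fin n → Fin (n + 1)) (x₀ : E)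
    (y : Fin n → E) : Fin n → E :=
  fun i => y i - (Fin.cons x₀ y : Fin (n + 1) → E) (p i)

section ParentShift

variable (R E : Type*) [Semiring R] [AddCommMonoid E] [Module R E] {n : ℕ}
  (p : Fin n → Fin (n + 1))

def parentShift : (Fin n → E) →ₗ[R] (Fin n → E) where
  toFun y i := (Fin.cons 0 y : Fin (n + 1) → E) (p i)
  map_add' y z := by
    ext i
    dsimp only [Pi.add_apply]
    generalize p i = j
    cases j using Fin.cases <;> simp
  map_smul' c y := by
    ext i
    dsimp only [Pi.smul_apply, RingHom.id_apply]
    generalize p i = j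
    cases j using Fin.cases <;> simp

variable {R E p}

theorem isNilpotent_parentShift {h : Fin (n + 1) → ℕ} (hp : ∀ i, h (p i) < h i.succ) :
    IsNilpotent (parentShift R E p) := by
  have hpow : ∀ k (y : Fin n → E) i, h i.succ < k → (parentShift R E p ^ k) y i = 0 := by
    intro k
    induction k with
    | zero => simp
    | succ k ih =>
      intro y i hi
      rw [pow_succ', Module.End.mul_apply]
      show (Fin.cons 0 _ : Fin (n + 1) → E) (p i) = 0
      rcases Fin.eq_zero_or_eq_succ (p i) with h0 | ⟨j, hj⟩
      · rw [h0, Fin.cons_zero]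
      · rw [hj, Fin.cons_succ]
        exact ih y j (by have := hp i; rw [hj] at this; omega)
  refine ⟨Finset.univ.sup h + 1, LinearMap.ext fun y => funext fun i => ?_⟩
  exact hpow _ y i (Nat.lt_succ_of_le (Finset.le_sup (Finset.mem_univ _)))

end ParentShift

section ChangeOfVariables

variable {E : Type*} [NormedAddCommGroup E] [NormedSpace ℝ E] [FiniteDimensional ℝ E]
  [MeasureSpace E] [BorelSpace E] [(volume : Measure E).IsAddHaarMeasure] {n : ℕ}
  {p : Fin n → Fin (n + 1)} {h : Fin (n + 1) → ℕ}

theorem measurePreserving_parentDiff (hp : ∀ i, h (p i) < h i.succ) (x₀ : E) :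
    MeasurePreserving (parentDiff p x₀) := by
  have hdecomp : parentDiff p x₀ = fun y =>
      (1 - parentShift ℝ E p) y - fun i => (Fin.cons x₀ 0 : Fin (n + 1) → E) (p i) := by
    ext y i
    show y i - (Fin.cons x₀ y : Fin (n + 1) → E) (p i) =
      y i - (Fin.cons 0 y : Fin (n + 1) → E) (p i) - (Fin.cons x₀ 0 : Fin (n + 1) → E) (p i)
    generalize p i = j
    cases j using Fin.cases <;> simp
  rw [hdecomp]
  exact (measurePreserving_sub_right _ _).comp
    (LinearMap.measurePreserving_of_det_eq_one _
      (LinearMap.det_one_sub_of_isNilpotent (isNilpotent_parentShift hp)))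

variable {g : E → ℝ}

theorem integrable_prod_comp_parentDiff (hp : ∀ i, h (p i) < h i.succ) (x₀ : E)
    (hg : Integrable g) : Integrable fun y => ∏ i, g (parentDiff p x₀ y i) :=
  (measurePreserving_parentDiff hp x₀).integrable_comp_of_integrable
    (g := fun u : Fin n → E => ∏ i, g (u i)) (Integrable.fintype_prod fun _ => hg)

theorem integral_prod_comp_parentDiff (hp : ∀ i, h (p i) < h i.succ) (x₀ : E)
    (hg : Integrable g) : ∫ y, ∏ i, g (parentDiff p x₀ y i) = (∫ x, g x) ^ n := by
  have hmp := measurePreserving_parentDiff hp x₀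
  have hG : Integrable fun u : Fin n → E => ∏ i, g (u i) := Integrable.fintype_prod fun _ => hg
  calc ∫ y, ∏ i, g (parentDiff p x₀ y i)
      = ∫ u, ∏ i, g (u i) ∂(volume.map (parentDiff p x₀)) :=
        (integral_map hmp.aemeasurable (hmp.map_eq ▸ hG.aestronglyMeasurable)).symm
    _ = (∫ x, g x) ^ n := by
        rw [hmp.map_eq, integral_fintype_prod_volume_eq_prod, Finset.prod_const,
          Finset.card_univ, Fintype.card_fin]

end ChangeOfVariables

theorem stmt_18_general (m : ℝ) (hm : 0 < m) (n : ℕ)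
    (T : SimpleGraph (Fin (n + 1))) [DecidableRel T.Adj] (hT : T.IsTree)
    (x0 : EuclideanSpace ℝ (Fin 3)) :
    Integrable (fun y : Fin n → EuclideanSpace ℝ (Fin 3) =>
      ∏ e ∈ T.edgeFinset, edgeWeight m (Fin.cons x0 y) e) ∧
    (∫ y : Fin n → EuclideanSpace ℝ (Fin 3),
      ∏ e ∈ T.edgeFinset, edgeWeight m (Fin.cons x0 y) e) = (8 * π / m ^ 3) ^ n := by
  have hweight : (fun y : Fin n → EuclideanSpace ℝ (Fin 3) =>
      ∏ e ∈ T.edgeFinset, edgeWeight m (Fin.cons x0 y) e) = fun y =>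
      ∏ i, exp (-m * ‖parentDiff hT.connected.parent x0 y i‖) := by
    ext y
    rw [hT.prod_edgeFinset_eq_prod_parent]
    rfl
  have hp := hT.connected.dist_parent_lt
  have hg := integrable_exp_neg_mul_norm (volume : Measure (EuclideanSpace ℝ (Fin 3))) hm
  rw [hweight, ← EuclideanSpace.integral_exp_neg_mul_norm_fin_three hm]
  exact ⟨integrable_prod_comp_parentDiff (h := (T.dist · 0)) hp x0 hg,
    integral_prod_comp_parentDiff (h := (T.dist · 0)) hp x0 hg⟩

theorem stmt_18 (m : ℝ) (hm : 0 < m) (n : ℕ) (hn : 1 ≤ n)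
    (T : SimpleGraph (Fin (n + 1))) [DecidableRel T.Adj] (hT : T.IsTree)
    (x0 : EuclideanSpace ℝ (Fin 3)) :
    Integrable (fun y : Fin n → EuclideanSpace ℝ (Fin 3) =>
      ∏ e ∈ T.edgeFinset, edgeWeight m (Fin.cons x0 y) e) ∧
    (∫ y : Fin n → EuclideanSpace ℝ (Fin 3),
      ∏ e ∈ T.edgeFinset, edgeWeight m (Fin.cons x0 y) e) = (8 * π / m ^ 3) ^ n :=
  stmt_18_general m hm n T hT x0
end
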